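/- arXiv:1901.09519 — 3 statements merged into one kernel-verified Lean document; each statement's English description precedes it below -/
import Mathlib

section
/- For every real σ > 1 and every real t, the squared modulus of the Riemann zeta function satisfies |ζ(σ + it)|² = (ζ(4σ)/ζ(2σ)) · ∏_p (1 − (2/(p^σ + p^{−σ})) cos(t log p))^{−1}, where the product runs over all prime numbers p and converges. -/
open Real Complex

open scoped ComplexOrder

/-! With `a = p^{-σ}` and `θ = t log p`, the Euler factor of `|ζ(σ + it)|²` at `p` is
`|1 - a e^{-iθ}|⁻² = (1 - 2a cos θ + a²)⁻¹`, while `1 + a² = (1 - a⁴) / (1 - a²)` and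
`1 - 2 cos θ / (p^σ + p^{-σ}) = (1 - 2a cos θ + a²) / (1 + a²)`.
So the `p`-th factor of the product is the `p`-th Euler factor of `ζ(2σ) |ζ(σ + it)|² / ζ(4σ)`,
and the identity follows from the Euler products, taken in norm. Since `ζ` is a positive real
on `(1, ∞)`, the ratio of norms `‖ζ(4σ)‖ / ‖ζ(2σ)‖` is `ζ(4σ) / ζ(2σ)` itself. -/

lemma norm_inv_one_sub_ofReal_cpow_neg {x : ℝ} (hx : 1 ≤ x) {r : ℝ} (hr : 0 ≤ r) :
    ‖(1 - (x : ℂ) ^ (-(r : ℂ)))⁻¹‖ = (1 - x ^ (-r))⁻¹ := by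
  have hle : x ^ (-r) ≤ 1 := Real.rpow_le_one_of_one_le_of_nonpos hx (neg_nonpos.mpr hr)
  rw [← ofReal_neg, ← ofReal_cpow (by linarith), ← ofReal_one, ← ofReal_sub, ← ofReal_inv,
    norm_real, Real.norm_of_nonneg (inv_nonneg.mpr (sub_nonneg.mpr hle))]

lemma ofReal_cpow_neg_add_mul_I_re {x : ℝ} (hx : 0 < x) (σ t : ℝ) :
    ((x : ℂ) ^ (-(σ + t * I))).re = x ^ (-σ) * Real.cos (t * Real.log x) := by
  rw [cpow_def_of_ne_zero (ofReal_ne_zero.mpr hx.ne'), ← ofReal_log hx.le, exp_re,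
    Real.rpow_def_of_pos hx]
  simp [mul_comm]

lemma sq_norm_inv_one_sub_ofReal_cpow_neg_add_mul_I {x : ℝ} (hx : 0 < x) (σ t : ℝ) :
    ‖(1 - (x : ℂ) ^ (-(σ + t * I)))⁻¹‖ ^ 2 =
      (1 - 2 * x ^ (-σ) * Real.cos (t * Real.log x) + (x ^ (-σ)) ^ 2)⁻¹ := by
  rw [norm_inv, inv_pow, Complex.sq_norm, normSq_sub, normSq_one, one_mul, conj_re,
    ← Complex.sq_norm, norm_cpow_eq_rpow_re_of_pos hx, ofReal_cpow_neg_add_mul_I_re hx]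
  simp only [neg_re, add_re, ofReal_re, mul_re, I_re, I_im, ofReal_im]
  ring_nf

lemma inv_one_sub_two_div_add_inv_mul {a : ℝ} (ha : a ≠ 0) (ha1 : a ^ 2 ≠ 1) (c : ℝ) :
    (1 - 2 / (a⁻¹ + a) * c)⁻¹ =
      (1 - a ^ 2)⁻¹ * (1 - 2 * a * c + a ^ 2)⁻¹ / (1 - (a ^ 2) ^ 2)⁻¹ := by
  have h1 : 1 + a ^ 2 ≠ 0 := by positivity
  have h2 : 1 - a ^ 2 ≠ 0 := sub_ne_zero.mpr (Ne.symm ha1)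
  rw [show 1 - (a ^ 2) ^ 2 = (1 - a ^ 2) * (1 + a ^ 2) by ring,
    show 1 - 2 / (a⁻¹ + a) * c = (1 - 2 * a * c + a ^ 2) / (1 + a ^ 2) by field_simp; ring]
  field_simp

lemma inv_one_sub_two_div_mul_cos_eq_norm_euler_factors {n : ℕ} (hn : 1 < n) {σ : ℝ}
    (hσ : 0 < σ) (t : ℝ) :
    (1 - 2 / ((n : ℝ) ^ σ + (n : ℝ) ^ (-σ)) * Real.cos (t * Real.log n))⁻¹ =
      ‖(1 - (n : ℂ) ^ (-((2 * σ : ℝ) : ℂ)))⁻¹‖ * ‖(1 - (n : ℂ) ^ (-((σ : ℂ) + t * I)))⁻¹‖ ^ 2 /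
        ‖(1 - (n : ℂ) ^ (-((4 * σ : ℝ) : ℂ)))⁻¹‖ := by
  have hx : (1 : ℝ) < n := by exact_mod_cast hn
  have hx0 : (0 : ℝ) ≤ n := by positivity
  have ha : (n : ℝ) ^ (-σ) ≠ 0 := (Real.rpow_pos_of_pos (by linarith) _).ne'
  have ha1 : ((n : ℝ) ^ (-σ)) ^ 2 ≠ 1 := by
    rw [← Real.rpow_mul_natCast hx0]
    exact (Real.rpow_lt_one_of_one_lt_of_neg hx (by push_cast; linarith)).ne
  rw [← ofReal_natCast, sq_norm_inv_one_sub_ofReal_cpow_neg_add_mul_I (by linarith),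
    norm_inv_one_sub_ofReal_cpow_neg hx.le (by linarith),
    norm_inv_one_sub_ofReal_cpow_neg hx.le (by linarith),
    show -(2 * σ) = -σ * (2 : ℕ) by push_cast; ring,
    show -(4 * σ) = -σ * (2 * 2 : ℕ) by push_cast; ring,
    Real.rpow_mul_natCast hx0, Real.rpow_mul_natCast hx0, pow_mul,
    ← inv_one_sub_two_div_add_inv_mul ha ha1, Real.rpow_neg hx0, inv_inv]

/-- For every real `σ > 1` and every real `t`,
`|ζ(σ + it)|² = (ζ(4σ)/ζ(2σ)) · ∏_p (1 − (2/(p^σ + p^{−σ})) cos(t log p))⁻¹`,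
the product running over all primes `p` and converging. -/
theorem zeta_abs_sq_eq_zeta_ratio_mul_prod (σ t : ℝ) (hσ : 1 < σ) :
    Multipliable (fun p : Nat.Primes =>
      (1 - (2 / (((p : ℕ) : ℝ) ^ σ + ((p : ℕ) : ℝ) ^ (-σ))) *
        Real.cos (t * Real.log (p : ℕ)))⁻¹) ∧
    ((‖riemannZeta ((σ : ℂ) + (t : ℂ) * Complex.I)‖ ^ 2 : ℝ) : ℂ) =
      riemannZeta ((4 * σ : ℝ) : ℂ) / riemannZeta ((2 * σ : ℝ) : ℂ) *
        ((∏' p : Nat.Primes,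
          (1 - (2 / (((p : ℕ) : ℝ) ^ σ + ((p : ℕ) : ℝ) ^ (-σ))) *
            Real.cos (t * Real.log (p : ℕ)))⁻¹ : ℝ) : ℂ) := by
  have h2σ : 1 < 2 * σ := by linarith
  have h4σ : 1 < 4 * σ := by linarith
  have euler {s : ℂ} (hs : 1 < s.re) := (riemannZeta_eulerProduct_hasProd hs).norm
  have zeta_ne {r : ℝ} (hr : 1 < r) : ‖riemannZeta r‖ ≠ 0 :=
    norm_ne_zero_iff.mpr (riemannZeta_pos_of_one_lt hr).ne'
  have hprod := (((euler (s := (2 * σ : ℝ)) (by rwa [ofReal_re])).mul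
      ((euler (s := σ + t * I) (by simpa using hσ)).pow 2)).div₀
      (euler (s := (4 * σ : ℝ)) (by rwa [ofReal_re])) (zeta_ne h4σ)).congr_fun
    fun p ↦ inv_one_sub_two_div_mul_cos_eq_norm_euler_factors p.prop.one_lt (by linarith) t
  refine ⟨hprod.multipliable, ?_⟩
  rw [← norm_of_nonneg' (riemannZeta_pos_of_one_lt h4σ).le,
    ← norm_of_nonneg' (riemannZeta_pos_of_one_lt h2σ).le, hprod.tprod_eq, ← ofReal_div,
    ← ofReal_mul]
  congr 1
  have h2 := zeta_ne h2σ
  have h4 := zeta_ne h4σ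
  generalize ‖riemannZeta ((2 * σ : ℝ) : ℂ)‖ = z₂ at h2
  generalize ‖riemannZeta ((4 * σ : ℝ) : ℂ)‖ = z₄ at h4
  field_simp
end

section
/- ζ(3/2) = π^{3/2} · (675675/617080275)^{1/4} · ∏_p (1 − 2/(p^{3/2} + p^{−3/2}))^{−1/2} · (1 − 2/(p³ + p^{−3}))^{1/4}, where the product runs over all prime numbers p and converges. -/
open Real Complex

namespace ZetaPP

open Finset Real

theorem bern5 : bernoulli' 5 = 0 := bernoulli'_eq_zero_of_odd (by decide) (by norm_num)
theorem bern6 : bernoulli' 6 = 1 / 42 := by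
  rw [bernoulli'_def]
  norm_num [sum_range_succ, bern5, Nat.choose]
theorem bern7 : bernoulli' 7 = 0 := bernoulli'_eq_zero_of_odd (by decide) (by norm_num)
theorem bern8 : bernoulli' 8 = -1 / 30 := by
  rw [bernoulli'_def]
  norm_num [sum_range_succ, bern5, bern6, bern7, Nat.choose]
theorem bern9 : bernoulli' 9 = 0 := bernoulli'_eq_zero_of_odd (by decide) (by norm_num)
theorem bern10 : bernoulli' 10 = 5 / 66 := by
  rw [bernoulli'_def]
  norm_num [sum_range_succ, bern5, bern6, bern7, bern8, bern9, Nat.choose]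
theorem bern11 : bernoulli' 11 = 0 := bernoulli'_eq_zero_of_odd (by decide) (by norm_num)
theorem bern12 : bernoulli' 12 = -691 / 2730 := by
  rw [bernoulli'_def]
  norm_num [sum_range_succ, bern5, bern6, bern7, bern8, bern9, bern10, bern11, Nat.choose]

theorem rpow_neg_eq (s : ℕ) (n : ℕ) : (n:ℝ) ^ (-(s:ℝ)) = 1 / (n:ℝ) ^ s := by
  rw [Real.rpow_neg (Nat.cast_nonneg n), Real.rpow_natCast, one_div]

theorem Z6 : ∑' n : ℕ, (n:ℝ) ^ (-(6:ℝ)) = π ^ 6 / 945 := by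
  have h := hasSum_zeta_nat (k := 3) (by norm_num)
  have h2 : HasSum (fun n : ℕ => (n:ℝ) ^ (-(6:ℝ)))
      ((-1:ℝ) ^ (3+1) * 2 ^ (2*3-1) * π ^ (2*3) * (bernoulli (2*3) : ℝ) / (Nat.factorial (2*3))) := by
    refine h.congr_fun fun n => ?_
    rw [show ((6:ℝ)) = ((6:ℕ):ℝ) by norm_num, rpow_neg_eq 6]
  rw [h2.tsum_eq, bernoulli_eq_bernoulli'_of_ne_one (by norm_num), bern6]
  norm_num [Nat.factorial]
  ring

theorem Z12 : ∑' n : ℕ, (n:ℝ) ^ (-(12:ℝ)) = 691 * π ^ 12 / 638512875 := by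
  have h := hasSum_zeta_nat (k := 6) (by norm_num)
  have h2 : HasSum (fun n : ℕ => (n:ℝ) ^ (-(12:ℝ)))
      ((-1:ℝ) ^ (6+1) * 2 ^ (2*6-1) * π ^ (2*6) * (bernoulli (2*6) : ℝ) / (Nat.factorial (2*6))) := by
    refine h.congr_fun fun n => ?_
    rw [show ((12:ℝ)) = ((12:ℕ):ℝ) by norm_num, rpow_neg_eq 12]
  rw [h2.tsum_eq, bernoulli_eq_bernoulli'_of_ne_one (by norm_num), bern12]
  norm_num [Nat.factorial]
  ring

theorem euler_real {s : ℝ} (hs : 1 < s) :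
    HasProd (fun p : Nat.Primes => (1 - ((p:ℕ):ℝ) ^ (-s))⁻¹) (∑' n : ℕ, (n:ℝ) ^ (-s)) := by
  have hs0 : -s ≠ 0 := by intro h; nlinarith [neg_eq_zero.mp h]
  have hsum : Summable (fun n : ℕ => ‖(n:ℝ) ^ (-s)‖) := by
    have : ∀ n : ℕ, ‖(n:ℝ) ^ (-s)‖ = (n:ℝ) ^ (-s) := fun n =>
      Real.norm_of_nonneg (Real.rpow_nonneg (Nat.cast_nonneg n) _)
    rw [funext this]
    exact Real.summable_nat_rpow.mpr (by linarith)
  exact EulerProduct.eulerProduct_completely_multiplicative_hasProd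
    (f := { toFun := fun n : ℕ => (n:ℝ) ^ (-s),
            map_zero' := by simp [Real.zero_rpow hs0],
            map_one' := by simp,
            map_mul' := fun m n => by
              push_cast
              exact Real.mul_rpow (Nat.cast_nonneg m) (Nat.cast_nonneg n) }) hsum

theorem summable_rpow_primes {s : ℝ} (hs : 1 < s) :
    Summable (fun p : Nat.Primes => ((p:ℕ):ℝ) ^ (-s)) :=
  (Real.summable_nat_rpow.mpr (by linarith)).comp_injective Subtype.coe_injective

theorem prime_rpow_le_half {s : ℝ} (hs : 1 ≤ s) (p : Nat.Primes) :
    ((p:ℕ):ℝ) ^ (-s) ≤ 1 / 2 := by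
  have hp : (2:ℝ) ≤ ((p:ℕ):ℝ) := by exact_mod_cast p.prop.two_le
  have h1 : (2:ℝ) ≤ ((p:ℕ):ℝ) ^ s := by
    calc (2:ℝ) = (2:ℝ) ^ (1:ℝ) := (Real.rpow_one 2).symm
    _ ≤ (2:ℝ) ^ s := Real.rpow_le_rpow_of_exponent_le one_le_two hs
    _ ≤ ((p:ℕ):ℝ) ^ s := Real.rpow_le_rpow (by norm_num) hp (by linarith)
  rw [Real.rpow_neg (by positivity)]
  calc (((p:ℕ):ℝ) ^ s)⁻¹ ≤ (2:ℝ)⁻¹ := inv_anti₀ (by norm_num) h1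
  _ = 1 / 2 := by norm_num

theorem prime_rpow_pos (s : ℝ) (p : Nat.Primes) : 0 < ((p:ℕ):ℝ) ^ (-s) := by
  have hp : (0:ℝ) < ((p:ℕ):ℝ) := by
    have h := p.prop.two_le
    have : (2:ℝ) ≤ ((p:ℕ):ℝ) := by exact_mod_cast h
    linarith
  positivity

theorem summable_log_one_sub {f : Nat.Primes → ℝ} (hf : Summable f)
    (h0 : ∀ p, 0 < f p) (h2 : ∀ p, f p ≤ 1 / 2) :
    Summable fun p => Real.log (1 - f p) := by
  rw [← summable_neg_iff]
  refine Summable.of_nonneg_of_le (fun p => ?_) (fun p => ?_) (hf.mul_left 2)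
  · have h1 : 0 < 1 - f p := by linarith [h2 p]
    have := Real.log_nonpos h1.le (by linarith [h0 p])
    simpa using this
  · have h1 : 0 < 1 - f p := by linarith [h2 p]
    have hl := Real.log_le_sub_one_of_pos (inv_pos.mpr h1)
    rw [Real.log_inv] at hl
    have key : (1 - f p)⁻¹ ≤ 1 + 2 * f p := by
      rw [inv_le_iff_one_le_mul₀ h1]
      nlinarith [h0 p, h2 p]
    linarith

theorem exp_neg_S {s : ℝ} (hs : 1 < s)
    (hsum : Summable fun p : Nat.Primes => Real.log (1 - ((p:ℕ):ℝ) ^ (-s))) :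
    Real.exp (-∑' p : Nat.Primes, Real.log (1 - ((p:ℕ):ℝ) ^ (-s))) = ∑' n : ℕ, (n:ℝ) ^ (-s) := by
  have hpos : ∀ p : Nat.Primes, 0 < 1 - ((p:ℕ):ℝ) ^ (-s) := fun p => by
    linarith [prime_rpow_le_half hs.le p]
  have h := (hsum.hasSum.neg).rexp
  have hfe : (Real.exp ∘ fun p : Nat.Primes => -Real.log (1 - ((p:ℕ):ℝ) ^ (-s)))
      = fun p : Nat.Primes => (1 - ((p:ℕ):ℝ) ^ (-s))⁻¹ := by
    funext p
    simp only [Function.comp_apply, Real.exp_neg, Real.exp_log (hpos p)]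
  rw [hfe] at h
  exact h.unique (euler_real hs)

theorem pointwise (p : Nat.Primes) :
    (1 - 2 / (((p : ℕ) : ℝ) ^ (3 / 2 : ℝ) + ((p : ℕ) : ℝ) ^ (-(3 / 2) : ℝ))) ^ (-(1 / 2) : ℝ) *
      (1 - 2 / (((p : ℕ) : ℝ) ^ (3 : ℝ) + ((p : ℕ) : ℝ) ^ (-3 : ℝ))) ^ (1 / 4 : ℝ)
    = Real.exp (-Real.log (1 - ((p:ℕ):ℝ) ^ (-(3/2):ℝ))
        + Real.log (1 - ((p:ℕ):ℝ) ^ (-(6:ℝ))) * (3/4)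
        - Real.log (1 - ((p:ℕ):ℝ) ^ (-(12:ℝ))) * (1/4)) := by
  have hx0 : (0:ℝ) < ((p:ℕ):ℝ) := by
    have h := p.prop.two_le
    have : (2:ℝ) ≤ ((p:ℕ):ℝ) := by exact_mod_cast h
    linarith
  set x : ℝ := ((p:ℕ):ℝ) with hxdef
  set t : ℝ := x ^ (3/2 : ℝ) with htdef
  set u : ℝ := x ^ (-(3/2) : ℝ) with hudef
  have hu0 : 0 < u := by positivity
  have huh : u ≤ 1/2 := prime_rpow_le_half (by norm_num) p
  have hu1 : u < 1 := lt_of_le_of_lt huh (by norm_num)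
  have htu : u * t = 1 := by
    rw [hudef, htdef, ← Real.rpow_add hx0]; norm_num
  have ht : t = u⁻¹ := eq_inv_of_mul_eq_one_right htu
  have hx3 : x ^ (3:ℝ) = t ^ 2 := by
    rw [htdef, sq, ← Real.rpow_add hx0]; norm_num
  have hx3' : x ^ (-3:ℝ) = u ^ 2 := by
    rw [hudef, sq, ← Real.rpow_add hx0]; norm_num
  have hx6 : x ^ (-(6:ℝ)) = u ^ 4 := by
    rw [hudef, show (-(6:ℝ)) = (-(3/2)) * ((4:ℕ):ℝ) by push_cast; norm_num,
      Real.rpow_mul hx0.le, Real.rpow_natCast]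
  have hx12 : x ^ (-(12:ℝ)) = u ^ 8 := by
    rw [hudef, show (-(12:ℝ)) = (-(3/2)) * ((8:ℕ):ℝ) by push_cast; norm_num,
      Real.rpow_mul hx0.le, Real.rpow_natCast]
  have n1 : (1:ℝ) - u ≠ 0 := ne_of_gt (by linarith)
  have n2 : (0:ℝ) < 1 + u := by linarith
  have n3 : (0:ℝ) < 1 + u^2 := by positivity
  have n4 : (0:ℝ) < 1 + u^4 := by positivity
  have n5 : (1:ℝ) - u^2 ≠ 0 := by nlinarith
  have hA : 1 - 2 / (t + u) = (1-u)^2 / (1+u^2) := by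
    rw [ht]
    field_simp
    ring
  have hB : 1 - 2 / (t^2 + u^2) = (1-u^2)^2 / (1+u^4) := by
    rw [ht]
    field_simp
    ring
  have hApos : 0 < (1-u)^2 / (1+u^2) := div_pos (by positivity) n3
  have hBpos : 0 < (1-u^2)^2 / (1+u^4) := div_pos (by positivity) n4
  rw [hx3, hx3', hA, hB, hx6, hx12,
    Real.rpow_def_of_pos hApos, Real.rpow_def_of_pos hBpos, ← Real.exp_add]
  congr 1
  have hlogA : Real.log ((1-u)^2 / (1+u^2)) = 2 * Real.log (1-u) - Real.log (1+u^2) := by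
    rw [Real.log_div (pow_ne_zero 2 n1) n3.ne', Real.log_pow]
    push_cast; ring
  have hlogB : Real.log ((1-u^2)^2 / (1+u^4))
      = 2 * (Real.log (1-u) + Real.log (1+u)) - Real.log (1+u^4) := by
    rw [Real.log_div (pow_ne_zero 2 n5) n4.ne', Real.log_pow,
      show (1:ℝ) - u^2 = (1-u)*(1+u) by ring, Real.log_mul n1 n2.ne']
    push_cast; ring
  have h6 : Real.log (1 - u^4)
      = Real.log (1-u) + Real.log (1+u) + Real.log (1+u^2) := by
    rw [show (1:ℝ) - u^4 = (1-u)*(1+u)*(1+u^2) by ring,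
      Real.log_mul (mul_ne_zero n1 n2.ne') n3.ne', Real.log_mul n1 n2.ne']
  have h8 : Real.log (1 - u^8)
      = Real.log (1-u) + Real.log (1+u) + Real.log (1+u^2) + Real.log (1+u^4) := by
    rw [show (1:ℝ) - u^8 = (1-u)*(1+u)*(1+u^2)*(1+u^4) by ring,
      Real.log_mul (mul_ne_zero (mul_ne_zero n1 n2.ne') n3.ne') n4.ne',
      Real.log_mul (mul_ne_zero n1 n2.ne') n3.ne', Real.log_mul n1 n2.ne']
  rw [hlogA, hlogB, h6, h8]
  ring

theorem const_eq_one :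
    π ^ (3/2:ℝ) * (675675/617080275 : ℝ) ^ (1/4:ℝ) *
      ((π^6/945 : ℝ) ^ (-(3/4):ℝ) * (691*π^12/638512875 : ℝ) ^ (1/4:ℝ)) = 1 := by
  have hπ := Real.pi_pos
  have p1 : (0:ℝ) < 675675/617080275 := by norm_num
  have p2 : (0:ℝ) < π^6/945 := by positivity
  have p3 : (0:ℝ) < 691*π^12/638512875 := by positivity
  rw [Real.rpow_def_of_pos hπ, Real.rpow_def_of_pos p1, Real.rpow_def_of_pos p2,
    Real.rpow_def_of_pos p3, ← Real.exp_add, ← Real.exp_add, ← Real.exp_add]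
  rw [Real.exp_eq_one_iff]
  have l1 : Real.log (675675/617080275 : ℝ) = Real.log 675675 - Real.log 617080275 :=
    Real.log_div (by norm_num) (by norm_num)
  have l2 : Real.log (π^6/945 : ℝ) = 6 * Real.log π - Real.log 945 := by
    rw [Real.log_div (by positivity) (by norm_num), Real.log_pow]; push_cast; ring
  have l3 : Real.log (691*π^12/638512875 : ℝ)
      = Real.log 691 + 12 * Real.log π - Real.log 638512875 := by
    rw [Real.log_div (by positivity) (by norm_num), Real.log_mul (by norm_num) (by positivity),
      Real.log_pow]
    push_cast; ring
  have key : Real.log (675675:ℝ) + 3 * Real.log 945 + Real.log 691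
      = Real.log 617080275 + Real.log (638512875:ℝ) := by
    have h := congrArg Real.log
      (show ((675675 * 945^3 * 691 : ℝ)) = 617080275 * 638512875 by norm_num)
    rwa [Real.log_mul (by norm_num) (by norm_num), Real.log_mul (by norm_num) (by norm_num),
      Real.log_pow, Real.log_mul (by norm_num) (by norm_num),
      show ((3:ℕ):ℝ) = 3 by norm_num] at h
  rw [l1, l2, l3]
  linarith

theorem zeta_link : riemannZeta (3/2) = (((∑' n : ℕ, (n:ℝ) ^ (-(3/2:ℝ))) : ℝ) : ℂ) := by
  have hre : 1 < (3/2 : ℂ).re := by norm_num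
  have hC := riemannZeta_eulerProduct_hasProd hre
  have hmap := (euler_real (s := 3/2) (by norm_num)).map Complex.ofRealHom
    Complex.continuous_ofReal
  have hfe : (⇑Complex.ofRealHom ∘ fun p : Nat.Primes => (1 - ((p:ℕ):ℝ) ^ (-(3/2:ℝ)))⁻¹)
      = fun p : Nat.Primes => (1 - (p : ℂ) ^ (-(3/2:ℂ)))⁻¹ := by
    funext p
    simp only [Function.comp_apply, Complex.ofRealHom_eq_coe, Complex.ofReal_inv,
      Complex.ofReal_sub, Complex.ofReal_one]
    congr 2
    rw [Complex.ofReal_cpow (Nat.cast_nonneg _)]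
    push_cast
    norm_num
  rw [hfe] at hmap
  exact (hmap.unique hC).symm

theorem exp_comb (S1 S2 S3 Z1 : ℝ) (e1 : Real.exp (-S1) = Z1)
    (e2 : Real.exp (-S2) = π^6/945) (e3 : Real.exp (-S3) = 691*π^12/638512875) :
    Real.exp (-S1 + S2*(3/4) - S3*(1/4))
      = Z1 * ((π^6/945 : ℝ) ^ (-(3/4):ℝ) * (691*π^12/638512875 : ℝ) ^ (1/4:ℝ)) := by
  rw [sub_eq_add_neg, Real.exp_add, Real.exp_add,
    show S2*(3/4) = -S2 * (-(3/4)) by ring, show -(S3*(1/4)) = -S3 * (1/4) by ring,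
    Real.exp_mul, Real.exp_mul, e1, e2, e3]
  ring

end ZetaPP

open ZetaPP

/-- `ζ(3/2) = π^{3/2} · (675675/617080275)^{1/4} ·
  ∏_p (1 − 2/(p^{3/2} + p^{−3/2}))^{−1/2} · (1 − 2/(p³ + p^{−3}))^{1/4}`,
the product running over all primes `p` and converging. -/
theorem zeta_three_halves_prime_prod :
    Multipliable (fun p : Nat.Primes =>
      (1 - 2 / (((p : ℕ) : ℝ) ^ (3 / 2 : ℝ) + ((p : ℕ) : ℝ) ^ (-(3 / 2) : ℝ))) ^ (-(1 / 2) : ℝ) *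
        (1 - 2 / (((p : ℕ) : ℝ) ^ (3 : ℝ) + ((p : ℕ) : ℝ) ^ (-3 : ℝ))) ^ (1 / 4 : ℝ)) ∧
    riemannZeta (3 / 2) =
      ((Real.pi ^ (3 / 2 : ℝ) * (675675 / 617080275 : ℝ) ^ (1 / 4 : ℝ) *
        ∏' p : Nat.Primes,
          (1 - 2 / (((p : ℕ) : ℝ) ^ (3 / 2 : ℝ) + ((p : ℕ) : ℝ) ^ (-(3 / 2) : ℝ))) ^ (-(1 / 2) : ℝ) *
            (1 - 2 / (((p : ℕ) : ℝ) ^ (3 : ℝ) + ((p : ℕ) : ℝ) ^ (-3 : ℝ))) ^ (1 / 4 : ℝ)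
        : ℝ) : ℂ) := by
  have hs1 : Summable fun p : Nat.Primes => Real.log (1 - ((p:ℕ):ℝ) ^ (-(3/2:ℝ))) :=
    summable_log_one_sub (summable_rpow_primes (by norm_num))
      (fun p => prime_rpow_pos _ p) (fun p => prime_rpow_le_half (by norm_num) p)
  have hs2 : Summable fun p : Nat.Primes => Real.log (1 - ((p:ℕ):ℝ) ^ (-(6:ℝ))) :=
    summable_log_one_sub (summable_rpow_primes (by norm_num))
      (fun p => prime_rpow_pos _ p) (fun p => prime_rpow_le_half (by norm_num) p)
  have hs3 : Summable fun p : Nat.Primes => Real.log (1 - ((p:ℕ):ℝ) ^ (-(12:ℝ))) :=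
    summable_log_one_sub (summable_rpow_primes (by norm_num))
      (fun p => prime_rpow_pos _ p) (fun p => prime_rpow_le_half (by norm_num) p)
  have hL : HasSum (fun p : Nat.Primes =>
      -Real.log (1 - ((p:ℕ):ℝ) ^ (-(3/2:ℝ)))
        + Real.log (1 - ((p:ℕ):ℝ) ^ (-(6:ℝ))) * (3/4)
        - Real.log (1 - ((p:ℕ):ℝ) ^ (-(12:ℝ))) * (1/4))
      (-(∑' p : Nat.Primes, Real.log (1 - ((p:ℕ):ℝ) ^ (-(3/2:ℝ))))
        + (∑' p : Nat.Primes, Real.log (1 - ((p:ℕ):ℝ) ^ (-(6:ℝ)))) * (3/4)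
        - (∑' p : Nat.Primes, Real.log (1 - ((p:ℕ):ℝ) ^ (-(12:ℝ)))) * (1/4)) :=
    (hs1.hasSum.neg.add (hs2.hasSum.mul_right _)).sub (hs3.hasSum.mul_right _)
  have hprod := hL.rexp
  rw [show (Real.exp ∘ fun p : Nat.Primes =>
      -Real.log (1 - ((p:ℕ):ℝ) ^ (-(3/2:ℝ)))
        + Real.log (1 - ((p:ℕ):ℝ) ^ (-(6:ℝ))) * (3/4)
        - Real.log (1 - ((p:ℕ):ℝ) ^ (-(12:ℝ))) * (1/4))
      = fun p : Nat.Primes =>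
      (1 - 2 / (((p : ℕ) : ℝ) ^ (3 / 2 : ℝ) + ((p : ℕ) : ℝ) ^ (-(3 / 2) : ℝ))) ^ (-(1 / 2) : ℝ) *
        (1 - 2 / (((p : ℕ) : ℝ) ^ (3 : ℝ) + ((p : ℕ) : ℝ) ^ (-3 : ℝ))) ^ (1 / 4 : ℝ)
    from funext fun p => (pointwise p).symm] at hprod
  refine ⟨⟨_, hprod⟩, ?_⟩
  rw [hprod.tprod_eq,
    exp_comb _ _ _ _ (exp_neg_S (by norm_num) hs1)
      ((exp_neg_S (by norm_num) hs2).trans Z6)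
      ((exp_neg_S (by norm_num) hs3).trans Z12),
    show π ^ (3/2:ℝ) * (675675/617080275 : ℝ) ^ (1/4:ℝ) *
        ((∑' n : ℕ, (n:ℝ) ^ (-(3/2:ℝ))) *
          ((π^6/945 : ℝ) ^ (-(3/4):ℝ) * (691*π^12/638512875 : ℝ) ^ (1/4:ℝ)))
      = (∑' n : ℕ, (n:ℝ) ^ (-(3/2:ℝ))) *
          (π ^ (3/2:ℝ) * (675675/617080275 : ℝ) ^ (1/4:ℝ) *
            ((π^6/945 : ℝ) ^ (-(3/4):ℝ) * (691*π^12/638512875 : ℝ) ^ (1/4:ℝ))) by ring,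
    const_eq_one, mul_one]
  exact zeta_link
end

section
/- For every integer k ≥ 2, ζ(k) = π^k · √((−1)^{k+1} · B_{2k} · 2^{2k−1} / (2k)!) · ∏_p ((p^k + 1)/(p^k − 1))^{1/2}, where the product runs over all prime numbers p and converges. -/
open Real Complex

/-!
By the Euler product, `∏_p (p^k + 1)/(p^k - 1) = ∏_p (1 - p^{-2k}) / (1 - p^{-k})^2 = ζ(k)^2 / ζ(2k)`,
so the product of square roots is `ζ(k) / √ζ(2k)`. Euler's evaluation
`ζ(2k) = (-1)^{k+1} B_{2k} 2^{2k-1} π^{2k} / (2k)!` turns `√((-1)^{k+1} B_{2k} 2^{2k-1} / (2k)!)`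
into `√ζ(2k) / π^k`, and everything cancels to `ζ(k)`.
-/

lemma HasProd.rpow_const {ι : Type*} {f : ι → ℝ} {a : ℝ} (h : HasProd f a)
    (hf : ∀ i, 0 ≤ f i) {r : ℝ} (hr : 0 ≤ r) :
    HasProd (fun i => f i ^ r) (a ^ r) := by
  unfold HasProd at h ⊢
  simp_rw [Real.finsetProd_rpow _ _ (fun i _ => hf i)]
  exact ((Real.continuous_rpow_const hr).tendsto a).comp h

lemma summable_inv_nat_pow {k : ℕ} (hk : 1 < k) : Summable fun n : ℕ => ((n : ℝ) ^ k)⁻¹ := by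
  simpa only [one_div] using summable_one_div_nat_pow.mpr hk

lemma tsum_inv_nat_pow_pos {k : ℕ} (hk : 1 < k) : 0 < ∑' n : ℕ, ((n : ℝ) ^ k)⁻¹ :=
  (summable_inv_nat_pow hk).tsum_pos (fun n => by positivity) 1 (by simp)

lemma hasProd_one_sub_inv_prime_pow_inv {k : ℕ} (hk : 1 < k) :
    HasProd (fun p : Nat.Primes => (1 - (((p : ℕ) : ℝ) ^ k)⁻¹)⁻¹)
      (∑' n : ℕ, ((n : ℝ) ^ k)⁻¹) := by
  let f : ℕ →*₀ ℝ := invMonoidWithZeroHom.comp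
    ((powMonoidWithZeroHom (by omega : k ≠ 0)).comp (Nat.castRingHom ℝ).toMonoidWithZeroHom)
  have hf : ∀ n, f n = ((n : ℝ) ^ k)⁻¹ := fun n => rfl
  have hsum : Summable (‖f ·‖) := by
    simpa only [hf, norm_inv, norm_pow, RCLike.norm_natCast] using summable_inv_nat_pow hk
  simpa only [hf] using EulerProduct.eulerProduct_completely_multiplicative_hasProd hsum

lemma div_eq_one_sub_inv_inv_sq_mul {K : Type*} [Field K] {x : K} (hx0 : x ≠ 0) (hx1 : x ≠ 1) :
    (x + 1) / (x - 1) = ((1 - x⁻¹)⁻¹) ^ 2 * (1 - (x ^ 2)⁻¹) := by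
  have : x - 1 ≠ 0 := sub_ne_zero.mpr hx1
  field_simp
  ring

lemma one_lt_prime_pow (p : Nat.Primes) {k : ℕ} (hk : k ≠ 0) : 1 < ((p : ℕ) : ℝ) ^ k :=
  one_lt_pow₀ (Nat.one_lt_cast.mpr p.prop.one_lt) hk

lemma hasProd_prime_pow_add_one_div_sub_one {k : ℕ} (hk : 1 < k) :
    HasProd (fun p : Nat.Primes => (((p : ℕ) : ℝ) ^ k + 1) / (((p : ℕ) : ℝ) ^ k - 1))
      ((∑' n : ℕ, ((n : ℝ) ^ k)⁻¹) ^ 2 * (∑' n : ℕ, ((n : ℝ) ^ (2 * k))⁻¹)⁻¹) := by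
  have h := ((hasProd_one_sub_inv_prime_pow_inv hk).pow 2).mul
    ((hasProd_one_sub_inv_prime_pow_inv (by omega : 1 < 2 * k)).inv₀
      (tsum_inv_nat_pow_pos (by omega)).ne')
  refine h.congr_fun fun p => ?_
  have hp := one_lt_prime_pow p (by omega : k ≠ 0)
  rw [inv_inv, pow_mul', div_eq_one_sub_inv_inv_sq_mul (by positivity) hp.ne']

lemma riemannZeta_natCast_eq_ofReal_tsum {k : ℕ} (hk : 1 < k) :
    riemannZeta k = ((∑' n : ℕ, ((n : ℝ) ^ k)⁻¹ : ℝ) : ℂ) := by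
  rw [zeta_nat_eq_tsum_of_gt_one hk, Complex.ofReal_tsum]
  simp only [one_div, ofReal_inv, ofReal_pow, ofReal_natCast]

lemma tsum_inv_nat_pow_two_mul {k : ℕ} (hk : k ≠ 0) :
    ∑' n : ℕ, ((n : ℝ) ^ (2 * k))⁻¹ = (π ^ k) ^ 2 *
      ((-1) ^ (k + 1) * (bernoulli (2 * k) : ℝ) * 2 ^ (2 * k - 1) / ((2 * k).factorial : ℝ)) := by
  simp only [← one_div, (hasSum_zeta_nat hk).tsum_eq]
  ring

lemma mul_sqrt_mul_sqrt_sq_mul_inv {a b c w : ℝ} (ha : 0 ≤ a) (hb : 0 < b) (hw : 0 < w)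
    (hbc : w = b ^ 2 * c) : b * √c * √(a ^ 2 * w⁻¹) = a := by
  have hc : 0 < c := pos_of_mul_pos_right (hbc ▸ hw) (by positivity)
  rw [hbc, Real.sqrt_mul (by positivity), Real.sqrt_sq ha, Real.sqrt_inv,
    Real.sqrt_mul (by positivity), Real.sqrt_sq hb.le]
  field_simp

/-- For every integer `k ≥ 2`,
`ζ(k) = π^k · √((−1)^{k+1} · B_{2k} · 2^{2k−1} / (2k)!) · ∏_p ((p^k + 1)/(p^k − 1))^{1/2}`,
the product running over all primes `p` and converging. -/
theorem zeta_nat_prime_prod_ratio (k : ℕ) (hk : 2 ≤ k) :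
    Multipliable (fun p : Nat.Primes =>
      ((((p : ℕ) : ℝ) ^ k + 1) / (((p : ℕ) : ℝ) ^ k - 1)) ^ (1 / 2 : ℝ)) ∧
    riemannZeta ((k : ℕ) : ℂ) =
      ((Real.pi ^ k *
        Real.sqrt ((-1) ^ (k + 1) * (bernoulli (2 * k) : ℝ) * 2 ^ (2 * k - 1) /
          ((2 * k).factorial : ℝ)) *
        ∏' p : Nat.Primes,
          ((((p : ℕ) : ℝ) ^ k + 1) / (((p : ℕ) : ℝ) ^ k - 1)) ^ (1 / 2 : ℝ)
        : ℝ) : ℂ) := by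
  have hk1 : 1 < k := by omega
  have hfactor_nonneg (p : Nat.Primes) :
      0 ≤ (((p : ℕ) : ℝ) ^ k + 1) / (((p : ℕ) : ℝ) ^ k - 1) := by
    have := one_lt_prime_pow p (by omega : k ≠ 0)
    exact div_nonneg (by linarith) (by linarith)
  have hprod := (hasProd_prime_pow_add_one_div_sub_one hk1).rpow_const hfactor_nonneg
    (by norm_num : (0 : ℝ) ≤ 1 / 2)
  refine ⟨hprod.multipliable, ?_⟩
  rw [riemannZeta_natCast_eq_ofReal_tsum hk1, hprod.tprod_eq, ← Real.sqrt_eq_rpow,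
    mul_sqrt_mul_sqrt_sq_mul_inv (tsum_inv_nat_pow_pos hk1).le (by positivity)
      (tsum_inv_nat_pow_pos (by omega)) (tsum_inv_nat_pow_two_mul (by omega))]
end
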